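/- arXiv:math/9805096 — 2 statements merged into one kernel-verified Lean document; each statement's English description precedes it below -/
import Mathlib

section
/- Let K be a field and let L be the field of fractions of the polynomial ring K[X_t : t ∈ K]. For all distinct r, s ∈ K and every F in the subfield L_{{r,s}} generated by the variables X_t with t ∉ {r, s}, one has ψ(r)(ψ⁺(s)(F)) = −ψ⁺(s)(ψ(r)(F)). -/
noncomputable section

/-- The field `L`: the field of fractions of the polynomial ring `K[X_t : t ∈ K]`
in variables indexed by the elements of `K`. -/
abbrev LL (K : Type*) [Field K] := FractionRing (MvPolynomial K K)

variable (K : Type*) [Field K]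

/-- The variable `X_t` viewed inside `L`. -/
def Xv (t : K) : LL K :=
  algebraMap (MvPolynomial K K) (LL K) (MvPolynomial.X t)

/-- The constant `k ∈ K` viewed inside `L`. -/
def Cv (k : K) : LL K :=
  algebraMap (MvPolynomial K K) (LL K) (MvPolynomial.C k)

/-- The subfield `L_P ⊆ L` generated over `K` by the variables `X_t` with `t ∉ P`. -/
def LP (P : Set K) : Subfield (LL K) :=
  Subfield.closure (Set.range (Cv K) ∪ Xv K '' Pᶜ)

lemma const_mem (P : Set K) (k : K) : Cv K k ∈ LP K P :=
  Subfield.subset_closure (Or.inl ⟨k, rfl⟩)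

lemma Xv_mem {P : Set K} {t : K} (ht : t ∉ P) : Xv K t ∈ LP K P :=
  Subfield.subset_closure (Or.inr ⟨t, ht, rfl⟩)

lemma LP_anti {P Q : Set K} (h : P ⊆ Q) : LP K Q ≤ LP K P :=
  Subfield.closure_mono
    (Set.union_subset_union_right _
      (Set.image_mono (Set.compl_subset_compl.mpr h)))

/-- `ρ : L_P → L` is the `K`-algebra field embedding determined by the assignment
`X_t ↦ g t` on the generators `X_t`, `t ∉ P`. -/
def IsEmb (P : Set K) (g : K → LL K) (ρ : ↥(LP K P) →+* LL K) : Prop :=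
  (∀ k : K, ρ ⟨Cv K k, const_mem K P k⟩ = Cv K k) ∧
  ∀ (t : K) (ht : t ∉ P), ρ ⟨Xv K t, Xv_mem K ht⟩ = g t

end

lemma pair_sub_left {α : Type*} (r r' : α) : ({r} : Set α) ⊆ {r, r'} := by
  intro x hx; simp only [Set.mem_singleton_iff] at hx; simp [hx]

lemma pair_sub_right {α : Type*} (r r' : α) : ({r'} : Set α) ⊆ {r, r'} := by
  intro x hx; simp only [Set.mem_singleton_iff] at hx; simp [hx]

/-!
Both `ψ(r)` and `ψ⁺(s)` are built from diagonal embeddings `X_t ↦ c(t) X_t`. Two such embeddings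
commute on every `L_Q` they both preserve, since they commute on its generators. Hence the two
sides differ only through the prefactors: `ψ(r) ψ⁺(s) F = X_r ((s - r) X_s)⁻¹ · H` and
`ψ⁺(s) ψ(r) F = X_s⁻¹ (r - s)⁻¹ X_r · H` for the same `H`, and `(s - r)⁻¹ = -(r - s)⁻¹`.
-/

theorem Subfield.closure_closure_coe_preimage {E : Type*} [Field E] {T : Set E} :
    Subfield.closure (((↑) : Subfield.closure T → E) ⁻¹' T) = ⊤ := by
  refine eq_top_iff.2 fun x _ => ?_
  have hx : (x : E) ∈ (Subfield.closure (((↑) : Subfield.closure T → E) ⁻¹' T)).map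
      (Subfield.closure T).subtype := by
    rw [RingHom.map_field_closure, Subfield.coe_subtype, Set.image_preimage_eq_of_subset
      (by simp [Subfield.subset_closure])]
    exact x.2
  obtain ⟨y, hy, hyx⟩ := hx
  rwa [← Subtype.ext hyx]

section Generators

variable {K M : Type*} [Field K] [Field M] {P : Set K}

theorem LP.closure_coe_preimage_eq_top :
    Subfield.closure (((↑) : LP K P → LL K) ⁻¹' (Set.range (Cv K) ∪ Xv K '' Pᶜ)) = ⊤ :=
  Subfield.closure_closure_coe_preimage

theorem LP.ringHom_ext {f g : LP K P →+* M}
    (hC : ∀ k, f ⟨Cv K k, const_mem K P k⟩ = g ⟨Cv K k, const_mem K P k⟩)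
    (hX : ∀ t (ht : t ∉ P), f ⟨Xv K t, Xv_mem K ht⟩ = g ⟨Xv K t, Xv_mem K ht⟩) : f = g := by
  refine RingHom.eq_of_eqOn_of_field_closure_eq_top LP.closure_coe_preimage_eq_top ?_
  rintro ⟨_, _⟩ (⟨k, rfl⟩ | ⟨t, ht, rfl⟩)
  exacts [hC k, hX t ht]

theorem LP.map_mem (f : LP K P →+* M) {B : Subfield M}
    (hC : ∀ k, f ⟨Cv K k, const_mem K P k⟩ ∈ B)
    (hX : ∀ t (ht : t ∉ P), f ⟨Xv K t, Xv_mem K ht⟩ ∈ B) (x : LP K P) : f x ∈ B := by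
  suffices ⊤ ≤ B.comap f from this (Subfield.mem_top x)
  rw [← LP.closure_coe_preimage_eq_top, Subfield.closure_le]
  rintro ⟨_, _⟩ (⟨k, rfl⟩ | ⟨t, ht, rfl⟩)
  exacts [hC k, hX t ht]

end Generators

theorem Cv_eq_algebraMap {K : Type*} [Field K] (k : K) : Cv K k = algebraMap K (LL K) k := by
  rw [IsScalarTower.algebraMap_apply K (MvPolynomial K K) (LL K), MvPolynomial.algebraMap_eq]
  rfl

theorem Subfield.map_mk_mul {E M : Type*} [Field E] [Field M] {S : Subfield E} (ρ : S →+* M)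
    {a b : E} (ha : a ∈ S) (hb : b ∈ S) (hab : a * b ∈ S) :
    ρ ⟨a * b, hab⟩ = ρ ⟨a, ha⟩ * ρ ⟨b, hb⟩ :=
  map_mul ρ ⟨a, ha⟩ ⟨b, hb⟩

namespace IsEmb

variable {K : Type*} [Field K] {P Q : Set K} {c : K → K} {ρ : LP K P →+* LL K}

theorem apply_mem (hρ : IsEmb K P (fun t => Cv K (c t) * Xv K t) ρ) (hPQ : P ⊆ Q) {x : LL K}
    (hx : x ∈ LP K Q) : ρ ⟨x, LP_anti K hPQ hx⟩ ∈ LP K Q :=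
  LP.map_mem (ρ.comp (Subfield.inclusion (LP_anti K hPQ)))
    (fun k => (hρ.1 k).symm ▸ const_mem K Q k)
    (fun t ht => (hρ.2 t fun h => ht (hPQ h)).symm ▸ mul_mem (const_mem K Q _) (Xv_mem K ht))
    ⟨x, hx⟩

noncomputable def restrict (hρ : IsEmb K P (fun t => Cv K (c t) * Xv K t) ρ) (hPQ : P ⊆ Q) :
    LP K Q →+* LP K Q :=
  (ρ.comp (Subfield.inclusion (LP_anti K hPQ))).codRestrict _ fun x => hρ.apply_mem hPQ x.2

variable (hρ : IsEmb K P (fun t => Cv K (c t) * Xv K t) ρ) (hPQ : P ⊆ Q)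

theorem restrict_apply_Cv (k : K) :
    hρ.restrict hPQ ⟨Cv K k, const_mem K Q k⟩ = ⟨Cv K k, const_mem K Q k⟩ :=
  Subtype.ext (hρ.1 k)

theorem restrict_apply_Xv {t : K} (ht : t ∉ Q) :
    hρ.restrict hPQ ⟨Xv K t, Xv_mem K ht⟩ =
      ⟨Cv K (c t), const_mem K Q _⟩ * ⟨Xv K t, Xv_mem K ht⟩ :=
  Subtype.ext (hρ.2 t fun h => ht (hPQ h))

theorem restrict_comm {P' : Set K} {c' : K → K} {ρ' : LP K P' →+* LL K}
    (hρ' : IsEmb K P' (fun t => Cv K (c' t) * Xv K t) ρ') (hP'Q : P' ⊆ Q) :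
    (hρ.restrict hPQ).comp (hρ'.restrict hP'Q) = (hρ'.restrict hP'Q).comp (hρ.restrict hPQ) := by
  refine LP.ringHom_ext (fun k => ?_) (fun t ht => ?_)
  · simp only [RingHom.comp_apply, restrict_apply_Cv]
  · simp only [RingHom.comp_apply, restrict_apply_Xv _ _ ht, map_mul, restrict_apply_Cv]
    exact mul_left_comm _ _ _

theorem apply_apply_comm {P' : Set K} {c' : K → K} {ρ' : LP K P' →+* LL K}
    (hρ' : IsEmb K P' (fun t => Cv K (c' t) * Xv K t) ρ') (hP'Q : P' ⊆ Q) {x : LL K}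
    (hx : x ∈ LP K Q) :
    ρ ⟨ρ' ⟨x, LP_anti K hP'Q hx⟩, LP_anti K hPQ (hρ'.apply_mem hP'Q hx)⟩ =
      ρ' ⟨ρ ⟨x, LP_anti K hPQ hx⟩, LP_anti K hP'Q (hρ.apply_mem hPQ hx)⟩ :=
  congrArg Subtype.val (RingHom.congr_fun (hρ.restrict_comm hPQ hρ' hP'Q) ⟨x, hx⟩)

end IsEmb

/-- `ρr` and `ρs` are the embeddings underlying `ψ(r)` and `ψ⁺(s)`; `G = ψ⁺(s)(F)` and
`G' = ψ(r)(F)`. -/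
theorem psi_psiPlus_anticommute
    (K : Type*) [Field K] (r s : K) (hrs : r ≠ s)
    (ρr : ↥(LP K {r}) →+* LL K) (ρs : ↥(LP K {s}) →+* LL K)
    (hρr : IsEmb K {r} (fun t => Cv K (t - r) * Xv K t) ρr)
    (hρs : IsEmb K {s} (fun t => Cv K ((t - s)⁻¹) * Xv K t) ρs)
    (F : LL K) (hF : F ∈ LP K ({r, s} : Set K))
    (G G' : LL K)
    (hG : G ∈ LP K ({r} : Set K)) (hG' : G' ∈ LP K ({s} : Set K))
    (hGe : G = (Xv K s)⁻¹ * ρs ⟨F, LP_anti K (pair_sub_right r s) hF⟩)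
    (hG'e : G' = Xv K r * ρr ⟨F, LP_anti K (pair_sub_left r s) hF⟩) :
    Xv K r * ρr ⟨G, hG⟩ = -((Xv K s)⁻¹ * ρs ⟨G', hG'⟩) := by
  have hsr : s ∉ ({r} : Set K) := hrs.symm
  have hrs' : r ∉ ({s} : Set K) := hrs
  have hXs : ρr ⟨(Xv K s)⁻¹, inv_mem (Xv_mem K hsr)⟩ = (Cv K (s - r) * Xv K s)⁻¹ :=
    (map_inv₀ ρr ⟨Xv K s, Xv_mem K hsr⟩).trans (congrArg _ (hρr.2 s hsr))
  have hXr : ρs ⟨Xv K r, Xv_mem K hrs'⟩ = -(Cv K (s - r))⁻¹ * Xv K r := by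
    rw [hρs.2 r hrs']
    beta_reduce
    rw [Cv_eq_algebraMap, Cv_eq_algebraMap, ← neg_sub s r, inv_neg, map_neg, map_inv₀]
  subst hGe hG'e
  rw [Subfield.map_mk_mul ρr (inv_mem (Xv_mem K hsr))
      (LP_anti K (pair_sub_left r s) (hρs.apply_mem (pair_sub_right r s) hF)),
    Subfield.map_mk_mul ρs (Xv_mem K hrs')
      (LP_anti K (pair_sub_right r s) (hρr.apply_mem (pair_sub_left r s) hF)), hXs, hXr,
    hρr.apply_apply_comm (pair_sub_left r s) hρs (pair_sub_right r s) hF]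
  ring
end

section
/- Let ε > 0, let r ∈ ℂ with 0 < |r| < ε, let L ≥ 1, let a₁,…,a_L ∈ ℂ, and let g : ℂ → ℂ be complex-differentiable at every point of {s ∈ ℂ : 0 < |s| < ε}. Define f(s) = Σ_{l=1}^{L} a_l·(s−r)^{−l} + g(s) for s ∉ {0, r}. Then for every integer k' and all radii β, γ with 0 < β < |r| < γ < ε, one has (1/(2πi))·( ∮_{|s|=γ} f(s)·s^{−k'−1} ds − ∮_{|s|=β} f(s)·s^{−k'−1} ds ) = Σ_{l=1}^{L} a_l · C(−k'−1, l−1) · r^{−k'−l}, where C(w, m) = w(w−1)⋯(w−m+1)/m! is the generalized binomial coefficient and both circle integrals are counterclockwise circles centered at 0. -/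
/-!
Integrating by parts on a circle that avoids `r`,
`∮ (z - r) ^ (-n - 1) f = n⁻¹ ∮ (z - r) ^ (-n) f'`, lowers the order of the pole at the cost of
differentiating `f`, so everything reduces to a simple pole. There
`f z / (z - r) = dslope f r z + f r / (z - r)`: the `dslope` is holomorphic on the annulus, so its
two circle integrals agree, while `∮ (z - r)⁻¹` is `2πi` on the outer circle and `0` on the inner
one. Hence the two integrals of `(z - r) ^ (-l) f` differ by `2πi f⁽ˡ⁻¹⁾(r) / (l - 1)!`, and for
`f z = z ^ (-k' - 1)` this iterated derivative is the falling factorial times `r ^ (-k' - l)`.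
-/

open Complex Metric Set
open scoped Nat Real

theorem Metric.sphere_subset_closedBall_diff_ball {α : Type*} [PseudoMetricSpace α] {x : α}
    {β ρ γ : ℝ} (hβρ : β ≤ ρ) (hργ : ρ ≤ γ) : sphere x ρ ⊆ closedBall x γ \ ball x β :=
  fun _ hz => ⟨mem_closedBall.2 ((mem_sphere.1 hz).le.trans hργ),
    fun h => (mem_ball.1 h).not_ge (hβρ.trans (mem_sphere.1 hz).ge)⟩

namespace Complex

variable {U : Set ℂ} {f : ℂ → ℂ} {c r : ℂ} {R β γ : ℝ}

theorem continuousOn_sub_zpow_mul {s : Set ℂ} (hf : ContinuousOn f s) (hr : r ∉ s) (m : ℤ) :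
    ContinuousOn (fun z => (z - r) ^ m * f z) s :=
  ((continuousOn_id.sub continuousOn_const).zpow₀ m fun _ hz =>
    Or.inl (sub_ne_zero.2 (ne_of_mem_of_not_mem hz hr))).mul hf

theorem circleIntegral_sub_zpow_mul_deriv (hU : IsOpen U) (hf : DifferentiableOn ℂ f U)
    (hR : 0 ≤ R) (hS : sphere c R ⊆ U) (hr : r ∉ sphere c R) (m : ℤ) :
    (∮ z in C(c, R), (z - r) ^ m * deriv f z) =
      -(m * ∮ z in C(c, R), (z - r) ^ (m - 1) * f z) := by
  have hderiv : ∀ z ∈ sphere c R, HasDerivWithinAt (fun z => (z - r) ^ m * f z)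
      (m * ((z - r) ^ (m - 1) * f z) + (z - r) ^ m * deriv f z) (sphere c R) z := by
    intro z hz
    have hzr : z - r ≠ 0 := sub_ne_zero.2 (ne_of_mem_of_not_mem hz hr)
    have hpow := (hasDerivAt_zpow m (z - r) (Or.inl hzr)).comp_sub_const z r
    have hfz := (hf.differentiableAt (hU.mem_nhds (hS hz))).hasDerivAt
    exact (hpow.mul hfz).hasDerivWithinAt.congr_deriv (by ring)
  have hfc : ContinuousOn f (sphere c R) := hf.continuousOn.mono hS
  have hf'c : ContinuousOn (deriv f) (sphere c R) := (hf.deriv hU).continuousOn.mono hS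
  have h₁ : CircleIntegrable (fun z => m * ((z - r) ^ (m - 1) * f z)) c R :=
    (continuousOn_const.mul (continuousOn_sub_zpow_mul hfc hr _)).circleIntegrable hR
  have h₂ : CircleIntegrable (fun z => (z - r) ^ m * deriv f z) c R :=
    (continuousOn_sub_zpow_mul hf'c hr m).circleIntegrable hR
  have h := circleIntegral.integral_eq_zero_of_hasDerivWithinAt hR hderiv
  rw [circleIntegral.integral_add h₁ h₂, circleIntegral.integral_const_mul] at h
  linear_combination h

theorem circleIntegral_eq_of_differentiableOn_annulus (hU : IsOpen U)
    (hA : closedBall c γ \ ball c β ⊆ U) (hβ : 0 < β) (hβγ : β ≤ γ)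
    (hf : DifferentiableOn ℂ f U) : (∮ z in C(c, γ), f z) = ∮ z in C(c, β), f z :=
  circleIntegral_eq_of_differentiable_on_annulus_off_countable hβ hβγ countable_empty
    (hf.continuousOn.mono hA) fun _ hz => hf.differentiableAt (hU.mem_nhds
      (hA ⟨ball_subset_closedBall hz.1.1, fun h => hz.1.2 (ball_subset_closedBall h)⟩))

theorem circleIntegral_sub_inv_mul_eq_dslope (hf : ContinuousOn (dslope f r) (sphere c R))
    (hR : 0 ≤ R) (hr : r ∉ sphere c R) :
    (∮ z in C(c, R), (z - r)⁻¹ * f z) =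
      (∮ z in C(c, R), dslope f r z) + f r * ∮ z in C(c, R), (z - r)⁻¹ := by
  have hinv : ContinuousOn (fun z => f r * (z - r)⁻¹) (sphere c R) := by
    simpa [mul_comm] using continuousOn_sub_zpow_mul continuousOn_const hr (-1) (f := fun _ => f r)
  rw [← circleIntegral.integral_const_mul,
    ← circleIntegral.integral_add (hf.circleIntegrable hR) (hinv.circleIntegrable hR)]
  refine circleIntegral.integral_congr hR fun z hz => ?_
  have hzr : z - r ≠ 0 := sub_ne_zero.2 (ne_of_mem_of_not_mem hz hr)
  rw [dslope_of_ne _ (sub_ne_zero.1 hzr), slope_def_field]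
  field_simp
  ring

theorem circleIntegral_sub_inv_mul_sub_circleIntegral (hU : IsOpen U)
    (hA : closedBall c γ \ ball c β ⊆ U) (hβ : 0 < β) (hβr : β < ‖r - c‖) (hrγ : ‖r - c‖ < γ)
    (hf : DifferentiableOn ℂ f U) :
    (∮ z in C(c, γ), (z - r)⁻¹ * f z) - (∮ z in C(c, β), (z - r)⁻¹ * f z) = 2 * π * I * f r := by
  have hβγ : β ≤ γ := (hβr.trans hrγ).le
  have hrU : r ∈ U :=
    hA (sphere_subset_closedBall_diff_ball hβr.le hrγ.le (mem_sphere_iff_norm.2 rfl))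
  have hdslope : DifferentiableOn ℂ (dslope f r) U :=
    (differentiableOn_dslope (hU.mem_nhds hrU)).2 hf
  have hγS := (sphere_subset_closedBall_diff_ball (x := c) hβγ le_rfl).trans hA
  have hβS := (sphere_subset_closedBall_diff_ball (x := c) le_rfl hβγ).trans hA
  have hγinv : ∮ z in C(c, γ), (z - r)⁻¹ = 2 * π * I :=
    circleIntegral.integral_sub_inv_of_mem_ball (mem_ball_iff_norm.2 hrγ)
  have hβinv : ∮ z in C(c, β), (z - r)⁻¹ = 0 := by
    refine (DifferentiableOn.diffContOnCl_ball ?_ subset_rfl).circleIntegral_eq_zero hβ.le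
    refine (differentiableOn_id.sub_const r).inv fun z hz => sub_ne_zero.2 fun hzr => ?_
    obtain rfl : z = r := hzr
    exact (mem_closedBall_iff_norm.1 hz).not_gt hβr
  rw [circleIntegral_sub_inv_mul_eq_dslope (hdslope.continuousOn.mono hγS) (hβ.le.trans hβγ)
      fun h => hrγ.ne (mem_sphere_iff_norm.1 h),
    circleIntegral_sub_inv_mul_eq_dslope (hdslope.continuousOn.mono hβS) hβ.le
      fun h => hβr.ne' (mem_sphere_iff_norm.1 h),
    hγinv, hβinv, circleIntegral_eq_of_differentiableOn_annulus hU hA hβ hβγ hdslope]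
  ring

theorem circleIntegral_sub_zpow_mul_sub_circleIntegral (hU : IsOpen U)
    (hA : closedBall c γ \ ball c β ⊆ U) (hβ : 0 < β) (hβr : β < ‖r - c‖) (hrγ : ‖r - c‖ < γ)
    (n : ℕ) (hf : DifferentiableOn ℂ f U) :
    (∮ z in C(c, γ), (z - r) ^ (-(n : ℤ) - 1) * f z) -
        (∮ z in C(c, β), (z - r) ^ (-(n : ℤ) - 1) * f z) =
      2 * π * I * iteratedDeriv n f r / n ! := by
  induction n generalizing f with
  | zero => simpa using circleIntegral_sub_inv_mul_sub_circleIntegral hU hA hβ hβr hrγ hf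
  | succ n ih =>
    have hβγ : β ≤ γ := (hβr.trans hrγ).le
    have hparts : ∀ ρ, β ≤ ρ → ρ ≤ γ → ‖r - c‖ ≠ ρ →
        (∮ z in C(c, ρ), (z - r) ^ (-(n : ℤ) - 1) * deriv f z) =
          (n + 1) * ∮ z in C(c, ρ), (z - r) ^ (-((n + 1 : ℕ) : ℤ) - 1) * f z := by
      intro ρ hβρ hργ hrρ
      have hexp : -(n : ℤ) - 1 - 1 = -((n + 1 : ℕ) : ℤ) - 1 := by push_cast; ring
      rw [circleIntegral_sub_zpow_mul_deriv hU hf (hβ.le.trans hβρ)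
        ((sphere_subset_closedBall_diff_ball hβρ hργ).trans hA)
        fun h => hrρ (mem_sphere_iff_norm.1 h), hexp]
      push_cast
      ring
    have h := ih (hf.deriv hU)
    rw [hparts γ hβγ le_rfl hrγ.ne, hparts β le_rfl hβγ hβr.ne', ← iteratedDeriv_succ'] at h
    rw [Nat.factorial_succ]
    push_cast at h ⊢
    field_simp
    linear_combination h

theorem circleIntegral_principalPart_add_mul (hf : ContinuousOn f (sphere c R))
    {g : ℂ → ℂ} (hg : ContinuousOn g (sphere c R)) (hR : 0 ≤ R) (hr : r ∉ sphere c R)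
    (s : Finset ℕ) (a : ℕ → ℂ) :
    (∮ z in C(c, R), (∑ l ∈ s, a l * (z - r) ^ (-(l : ℤ)) + g z) * f z) =
      (∑ l ∈ s, a l * ∮ z in C(c, R), (z - r) ^ (-(l : ℤ)) * f z) +
        ∮ z in C(c, R), g z * f z := by
  have hpole : ∀ l ∈ s, CircleIntegrable (fun z => a l * ((z - r) ^ (-(l : ℤ)) * f z)) c R :=
    fun l _ => (continuousOn_const.mul (continuousOn_sub_zpow_mul hf hr _)).circleIntegrable hR
  simp only [add_mul, Finset.sum_mul, mul_assoc]
  rw [circleIntegral.integral_add (CircleIntegrable.fun_sum s hpole)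
      ((hg.fun_mul hf).circleIntegrable hR), circleIntegral.integral_fun_sum hpole]
  simp only [circleIntegral.integral_const_mul]

theorem circleIntegral_principalPart_add_mul_sub_circleIntegral (hU : IsOpen U)
    (hA : closedBall c γ \ ball c β ⊆ U) (hβ : 0 < β) (hβr : β < ‖r - c‖) (hrγ : ‖r - c‖ < γ)
    (hf : DifferentiableOn ℂ f U) {g : ℂ → ℂ} (hg : DifferentiableOn ℂ g U) (s : Finset ℕ)
    (hs : 0 ∉ s) (a : ℕ → ℂ) :
    (∮ z in C(c, γ), (∑ l ∈ s, a l * (z - r) ^ (-(l : ℤ)) + g z) * f z) -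
        (∮ z in C(c, β), (∑ l ∈ s, a l * (z - r) ^ (-(l : ℤ)) + g z) * f z) =
      2 * π * I * ∑ l ∈ s, a l * (iteratedDeriv (l - 1) f r / (l - 1) !) := by
  have hβγ : β ≤ γ := (hβr.trans hrγ).le
  have hγS := (sphere_subset_closedBall_diff_ball (x := c) hβγ le_rfl).trans hA
  have hβS := (sphere_subset_closedBall_diff_ball (x := c) le_rfl hβγ).trans hA
  rw [circleIntegral_principalPart_add_mul (hf.continuousOn.mono hγS) (hg.continuousOn.mono hγS)
      (hβ.le.trans hβγ) (fun h => hrγ.ne (mem_sphere_iff_norm.1 h)),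
    circleIntegral_principalPart_add_mul (hf.continuousOn.mono hβS) (hg.continuousOn.mono hβS)
      hβ.le (fun h => hβr.ne' (mem_sphere_iff_norm.1 h)),
    circleIntegral_eq_of_differentiableOn_annulus hU hA hβ hβγ (hg.fun_mul hf),
    add_sub_add_right_eq_sub, ← Finset.sum_sub_distrib, Finset.mul_sum]
  refine Finset.sum_congr rfl fun l hl => ?_
  obtain ⟨n, rfl⟩ := Nat.exists_eq_succ_of_ne_zero (ne_of_mem_of_not_mem hl hs)
  rw [← mul_sub, show -((n + 1 : ℕ) : ℤ) = -(n : ℤ) - 1 by push_cast; ring,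
    circleIntegral_sub_zpow_mul_sub_circleIntegral hU hA hβ hβr hrγ n hf]
  simp only [Nat.succ_sub_one]
  ring

end Complex

theorem laurentCoeff_difference_eq_binomial_residues_general
    (ε : ℝ) (r : ℂ)
    (L : ℕ) (a : ℕ → ℂ) (g : ℂ → ℂ)
    (hg : ∀ s : ℂ, s ≠ 0 → ‖s‖ < ε → DifferentiableAt ℂ g s)
    (k' : ℤ) (β γ : ℝ) (hβ : 0 < β) (hβr : β < ‖r‖)
    (hrγ : ‖r‖ < γ) (hγε : γ < ε) :
    (1 / (2 * Real.pi * Complex.I)) *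
        ((circleIntegral
            (fun s => (∑ l ∈ Finset.Icc 1 L, a l * (s - r) ^ (-(l : ℤ)) + g s) *
              s ^ (-k' - 1)) 0 γ) -
         (circleIntegral
            (fun s => (∑ l ∈ Finset.Icc 1 L, a l * (s - r) ^ (-(l : ℤ)) + g s) *
              s ^ (-k' - 1)) 0 β)) =
      ∑ l ∈ Finset.Icc 1 L,
        a l * ((∏ i ∈ Finset.range (l - 1), (((-k' - 1 : ℤ) : ℂ) - (i : ℂ))) /
          ((l - 1).factorial : ℂ)) * r ^ (-k' - (l : ℤ)) := by
  have hU : IsOpen (ball (0 : ℂ) ε \ {0}) := isOpen_ball.sdiff isClosed_singleton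
  have hA : closedBall 0 γ \ ball 0 β ⊆ ball (0 : ℂ) ε \ {0} := fun z hz =>
    ⟨mem_ball_zero_iff.2 ((mem_closedBall_zero_iff.1 hz.1).trans_lt hγε),
      fun h => hz.2 (by simp [mem_singleton_iff.1 h, hβ])⟩
  have hgU : DifferentiableOn ℂ g (ball 0 ε \ {0}) := fun s hs =>
    (hg s hs.2 (mem_ball_zero_iff.1 hs.1)).differentiableWithinAt
  have hpow : DifferentiableOn ℂ (· ^ (-k' - 1)) (ball (0 : ℂ) ε \ {0}) := fun s hs =>
    (differentiableAt_zpow.2 (Or.inl hs.2)).differentiableWithinAt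
  rw [circleIntegral_principalPart_add_mul_sub_circleIntegral hU hA hβ (by simpa using hβr)
    (by simpa using hrγ) hpow hgU _ (by simp) a, one_div, inv_mul_cancel_left₀ two_pi_I_ne_zero]
  refine Finset.sum_congr rfl fun l hl => ?_
  rw [iteratedDeriv_eq_iterate, iter_deriv_zpow,
    show -k' - 1 - ((l - 1 : ℕ) : ℤ) = -k' - l by have := (Finset.mem_Icc.1 hl).1; omega]
  ring

/-- Difference of Laurent coefficients across the pole: let `f(s) = Σ_{l=1}^{L} a_l (s−r)^{−l}
+ g(s)` with `g` holomorphic on the punctured disk `{0 < |s| < ε}` and `0 < |r| < ε`.  For any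
integer `k'` and radii `0 < β < |r| < γ < ε`,
`(1/2πi)·(∮_{|s|=γ} f(s)·s^{−k'−1} ds − ∮_{|s|=β} f(s)·s^{−k'−1} ds)
  = Σ_{l=1}^{L} a_l·C(−k'−1, l−1)·r^{−k'−l}`,
where `C(w,m) = w(w−1)⋯(w−m+1)/m!`. -/
theorem laurentCoeff_difference_eq_binomial_residues
    (ε : ℝ) (hε : 0 < ε) (r : ℂ) (hr0 : r ≠ 0) (hrε : ‖r‖ < ε)
    (L : ℕ) (hL : 1 ≤ L) (a : ℕ → ℂ) (g : ℂ → ℂ)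
    (hg : ∀ s : ℂ, s ≠ 0 → ‖s‖ < ε → DifferentiableAt ℂ g s)
    (k' : ℤ) (β γ : ℝ) (hβ : 0 < β) (hβr : β < ‖r‖)
    (hrγ : ‖r‖ < γ) (hγε : γ < ε) :
    (1 / (2 * Real.pi * Complex.I)) *
        ((circleIntegral
            (fun s => (∑ l ∈ Finset.Icc 1 L, a l * (s - r) ^ (-(l : ℤ)) + g s) *
              s ^ (-k' - 1)) 0 γ) -
         (circleIntegral
            (fun s => (∑ l ∈ Finset.Icc 1 L, a l * (s - r) ^ (-(l : ℤ)) + g s) *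
              s ^ (-k' - 1)) 0 β)) =
      ∑ l ∈ Finset.Icc 1 L,
        a l * ((∏ i ∈ Finset.range (l - 1), (((-k' - 1 : ℤ) : ℂ) - (i : ℂ))) /
          ((l - 1).factorial : ℂ)) * r ^ (-k' - (l : ℤ)) :=
  laurentCoeff_difference_eq_binomial_residues_general ε r L a g hg k' β γ hβ hβr hrγ hγε
end
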